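/- arXiv:1801.03536 — 2 statements merged into one kernel-verified Lean document; each statement's English description precedes it below -/
import Mathlib

section
/- Let n₀ = (#A)² − 2(#A) + 2. For every letter a ∈ A and every integer n ≥ 2n₀, ‖ comp(σⁿ(a))/|σⁿ(a)| − α/‖α‖₁ ‖₁ ≤ exp( max_{b∈A} d(e_b M_σ^{n₀}, α) )^{ τ_B(M_σ^{n₀})^{⌊n/n₀⌋ − 1} } − 1, and this bound monotonically decreases to zero as n increases. -/
/-!
By Wielandt's bound every power `M^m`, `m ≥ n₀`, of the incidence matrix is positive.
A positive matrix `N` contracts Hilbert's projective metric: if the cross ratios of `x, y` are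
at most `β` and those of `N` at least `φ`, then those of `xN, yN` are at most
`(β + φ) / (1 + βφ)`, whence `τ_B(N) ≤ (1 - φ) / (1 + φ) < 1`. As `α` is projectively fixed by
`M`, the vector `comp(σⁿ(a)) = e_a Mⁿ` approaches `α` at the rate `τ_B(M^{n₀})` per block of
`n₀` steps, and the `ℓ¹` distance of normalized positive vectors at projective distance `d`
is at most `exp d - 1`.
-/

open List Filter

section Defs

variable {A : Type*}

/-- The segment `u_[i,j)` of the sequence `u`. -/
def seg (u : ℕ → A) (i j : ℕ) : List A :=
  (List.range (j - i)).map fun k => u (i + k)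

/-- A substitution applied to a word, letter by letter. -/
def substWord (σ : A → List A) (w : List A) : List A := w.flatMap σ

/-- `σ^p` applied to a word. -/
def substPow (σ : A → List A) (p : ℕ) (w : List A) : List A := (substWord σ)^[p] w

/-- A substitution is primitive if some power of it sends every letter to a word
containing every letter. -/
def IsPrimitiveSubst (σ : A → List A) : Prop :=
  ∃ k : ℕ, ∀ a b : A, a ∈ substPow σ k [b]

/-- `u` is a fixed point of `σ`: the image of every prefix of `u` is again a prefix of `u`. -/
def IsFixedPoint (σ : A → List A) (u : ℕ → A) : Prop :=
  ∀ m : ℕ, substWord σ (seg u 0 m) = seg u 0 (substWord σ (seg u 0 m)).length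

/-- `u` is aperiodic under the left shift: `T^i u ≠ u` for all `i ≥ 1`. -/
def AperiodicSeq (u : ℕ → A) : Prop := ∀ i : ℕ, 1 ≤ i → (fun n => u (n + i)) ≠ u

/-- The set `E_p` of natural `p`-cutting points. -/
def cutPoints (σ : A → List A) (u : ℕ → A) (p : ℕ) : Set ℕ :=
  { m | ∃ n : ℕ, m = (substPow σ p (seg u 0 n)).length }

/-- Unilateral recognizability of `σ` (with fixed point `u`). -/
def UnilaterallyRecognizable (σ : A → List A) (u : ℕ → A) : Prop :=
  ∃ L : ℕ, 1 ≤ L ∧ ∀ i j : ℕ,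
    seg u i (i + L) = seg u j (j + L) → i ∈ cutPoints σ u 1 → j ∈ cutPoints σ u 1

/-- `L_n(u)`: the set of factors of `u` of length `n`. -/
def factors (u : ℕ → A) (n : ℕ) : Set (List A) := { w | ∃ i : ℕ, w = seg u i (i + n) }

/-- `L(u)`: the language of `u` (including the empty word). -/
def lang (u : ℕ → A) : Set (List A) := { w | ∃ i n : ℕ, w = seg u i (i + n) }

/-- `w^n`: the concatenation of `n` copies of `w`. -/
def wpow (w : List A) (n : ℕ) : List A := (List.replicate n w).flatten

/-- A nonempty word `v` is primitive if `v = w^n` with `w` nonempty forces `w = v`. -/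
def PrimitiveWord (v : List A) : Prop :=
  ∀ w : List A, w ≠ [] → ∀ n : ℕ, 1 ≤ n → v = wpow w n → w = v

/-- `g` is a gap of occurrences of `w` in `u` if every interval of length `g` in `ℤ₊`
contains an occurrence of `w`. -/
def IsGap (u : ℕ → A) (w : List A) (g : ℕ) : Prop := ∀ i : ℕ, w <:+: seg u i (i + g)

/-- The minimal gap of a word. -/
noncomputable def minGap (u : ℕ → A) (w : List A) : ℕ := sInf { g | IsGap u w g }

/-- `g`: the maximum over `w ∈ L₂(u)` of the minimal gap of `w`. -/
noncomputable def gapConst (u : ℕ → A) : ℕ :=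
  sSup { m | ∃ w ∈ factors u 2, m = minGap u w }

/-- A natural `p`-cutting `{α, σ^p(u_{i'}), …, σ^p(u_{i'+k-1}), β}` of `u_[i,i+ℓ)`. -/
def IsNaturalCutting (σ : A → List A) (u : ℕ → A) (p i ℓ : ℕ)
    (α : List A) (i' k : ℕ) (β : List A) : Prop :=
  1 ≤ k ∧
  α <:+ substPow σ p [u (i' - 1)] ∧
  β <+: substPow σ p [u (i' + k)] ∧
  seg u i (i + ℓ) = α ++ substPow σ p (seg u i' (i' + k)) ++ β ∧
  i + α.length = (substPow σ p (seg u 0 i')).length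

section Fin

variable [Fintype A] [Nonempty A] [DecidableEq A]

/-- The incidence matrix of a substitution: the `(a,b)` entry is `|σ(a)|_b`. -/
def incMatrix (σ : A → List A) : Matrix A A ℕ := Matrix.of fun a b => (σ a).count b

/-- The incidence matrix as a real matrix. -/
noncomputable def incMatrixR (σ : A → List A) : Matrix A A ℝ :=
  Matrix.of fun a b => ((σ a).count b : ℝ)

/-- `S_p = max_{a ∈ A} |σ^p(a)|`. -/
def Sp (σ : A → List A) (p : ℕ) : ℕ :=
  Finset.univ.sup' Finset.univ_nonempty fun a => (substPow σ p [a]).length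

/-- `I_p = min_{a ∈ A} |σ^p(a)|`. -/
def Ip (σ : A → List A) (p : ℕ) : ℕ :=
  Finset.univ.inf' Finset.univ_nonempty fun a => (substPow σ p [a]).length

/-- `C = ⌈(max_b β_b)/(min_b β_b)⌉` for a positive eigenvector `β`. -/
noncomputable def Cst (β : A → ℝ) : ℕ :=
  ⌈(Finset.univ.sup' Finset.univ_nonempty β) / (Finset.univ.inf' Finset.univ_nonempty β)⌉₊

/-- `K = ⌈λ C² max{2(g+1), (#A)²}⌉`. -/
noncomputable def Kst (u : ℕ → A) (lam : ℝ) (β : A → ℝ) : ℕ :=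
  ⌈lam * (Cst β : ℝ) ^ 2 *
    max (2 * ((gapConst u : ℝ) + 1)) ((Fintype.card A : ℝ) ^ 2)⌉₊

/-- The constant `p₀` of Lemma 4.2. -/
noncomputable def p0 (u : ℕ → A) (lam : ℝ) (β : A → ℝ) : ℕ :=
  (Kst u lam β) ^ 2 * ((Cst β) ^ 4 * (Kst u lam β + 1) + 2 * (Cst β) ^ 2 + 1) *
    (∑ n ∈ Finset.Icc ((Cst β) ^ 2 * (Kst u lam β + 1) + 2)
        ((Kst u lam β + 1) * (Cst β) ^ 6 + 2 * (Cst β) ^ 4 + (Cst β) ^ 2 + 2), n) + 1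

/-- The constant `L₀ = (C⁴(K+1)+2C²+1) S_{p₀}`. -/
noncomputable def L0 (σ : A → List A) (u : ℕ → A) (lam : ℝ) (β : A → ℝ) : ℕ :=
  ((Cst β) ^ 4 * (Kst u lam β + 1) + 2 * (Cst β) ^ 2 + 1) * Sp σ (p0 u lam β)

/-- The ℓ¹ norm of a vector. -/
def l1norm (f : A → ℝ) : ℝ := ∑ a, |f a|

/-- The projective metric on positive row vectors. -/
noncomputable def projMetric (x y : A → ℝ) : ℝ :=
  Real.log ((Finset.univ.sup' Finset.univ_nonempty fun a => x a / y a) /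
    (Finset.univ.inf' Finset.univ_nonempty fun a => x a / y a))

/-- The Birkhoff contraction coefficient of a matrix. -/
noncomputable def birkhoff (M : Matrix A A ℝ) : ℝ :=
  sSup { r | ∃ x y : A → ℝ, (∀ a, 0 < x a) ∧ (∀ a, 0 < y a) ∧
    LinearIndependent ℝ ![x, y] ∧
    r = projMetric (Matrix.vecMul x M) (Matrix.vecMul y M) / projMetric x y }

end Fin

/-- Membership in the vertex set `V^*`: pairs `(xac, ybc)` of factors of `u` of length
`N + L₁ + 1` with `a ≠ b` and `|c| = L₁`. -/
def memVstar (u : ℕ → A) (N L₁ : ℕ) (p : List A × List A) : Prop :=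
  ∃ (x y c : List A) (a b : A), a ≠ b ∧
    x.length = N ∧ y.length = N ∧ c.length = L₁ ∧
    p.1 = x ++ a :: c ∧ p.2 = y ++ b :: c ∧
    p.1 ∈ factors u (N + L₁ + 1) ∧ p.2 ∈ factors u (N + L₁ + 1)

/-- An edge between representatives: there is a word `w` with `s'w` a suffix of `σ(s)` and
`t'w` a suffix of `σ(t)`. -/
def edgeRep (σ : A → List A) (p q : List A × List A) : Prop :=
  ∃ w : List A, w ≠ [] ∧ (q.1 ++ w) <:+ substWord σ p.1 ∧ (q.2 ++ w) <:+ substWord σ p.2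

/-- An edge in the graph `G` between the unordered pairs represented by `p` and `q`. -/
def graphEdge (σ : A → List A) (p q : List A × List A) : Prop :=
  edgeRep σ p q ∨ edgeRep σ p q.swap ∨ edgeRep σ p.swap q ∨ edgeRep σ p.swap q.swap

/-- A representative generates a gap of natural 1-cutting points. -/
def genGapRep (σ : A → List A) (p : List A × List A) : Prop :=
  ∃ (α β : A) (γ δ : List A),
    (σ α <:+ σ β ∧ σ α ≠ σ β) ∧
    List.Forall₂ (fun s t => σ s = σ t) γ δ ∧
    (α :: γ) <:+ substWord σ p.1 ∧ (β :: δ) <:+ substWord σ p.2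

/-- The unordered pair represented by `p` generates a gap of natural 1-cutting points. -/
def genGap (σ : A → List A) (p : List A × List A) : Prop :=
  genGapRep σ p ∨ genGapRep σ p.swap

/-- The list of consecutive two-letter blocks of a word. -/
def pairsList (l : List A) : List (List A) :=
  List.zipWith (fun a b => [a, b]) l l.tail

end Defs

section Walk

variable {V : Type*} {R : V → V → Prop} {f : ℕ → V} {m m' : ℕ} {a b c : V}

def IsWalk (R : V → V → Prop) (f : ℕ → V) (m : ℕ) (a b : V) : Prop :=
  f 0 = a ∧ f m = b ∧ ∀ i < m, R (f i) (f (i + 1))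

def HasWalk (R : V → V → Prop) (m : ℕ) (a b : V) : Prop := ∃ f, IsWalk R f m a b

lemma hasWalk_of_forall_rel (h : ∀ i, R (f i) (f (i + 1))) (m : ℕ) :
    HasWalk R m (f 0) (f m) :=
  ⟨f, rfl, rfl, fun i _ => h i⟩

lemma hasWalk_zero_iff : HasWalk R 0 a b ↔ a = b := by
  constructor
  · rintro ⟨f, rfl, rfl, -⟩
    rfl
  · rintro rfl
    exact ⟨fun _ => a, rfl, rfl, fun i hi => absurd hi (Nat.not_lt_zero i)⟩

lemma HasWalk.trans (h : HasWalk R m a b) (h' : HasWalk R m' b c) :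
    HasWalk R (m + m') a c := by
  obtain ⟨f, rfl, rfl, hf⟩ := h
  obtain ⟨g, hg0, rfl, hg⟩ := h'
  refine ⟨fun i => if i ≤ m then f i else g (i - m), by simp, ?_, fun i hi => ?_⟩
  · rcases Nat.eq_zero_or_pos m' with rfl | hm'
    · simp [hg0]
    · simp [show ¬ m + m' ≤ m by omega]
  · dsimp only
    rcases lt_trichotomy (i + 1) (m + 1) with hlt | heq | hgt
    · rw [if_pos (by omega), if_pos (by omega)]
      exact hf i (by omega)
    · obtain rfl : i = m := by omega
      rw [if_pos le_rfl, if_neg (by omega), show i + 1 - i = 0 + 1 by omega, ← hg0]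
      exact hg 0 (by omega)
    · rw [if_neg (by omega), if_neg (by omega), show i + 1 - m = i - m + 1 by omega]
      exact hg _ (by omega)

lemma hasWalk_succ_iff : HasWalk R (m + 1) a b ↔ ∃ c, HasWalk R m a c ∧ R c b := by
  constructor
  · rintro ⟨f, rfl, rfl, hf⟩
    exact ⟨f m, ⟨f, rfl, rfl, fun i hi => hf i (by omega)⟩, hf m (by omega)⟩
  · rintro ⟨c, hw, hR⟩
    exact hw.trans ⟨fun i => if i = 0 then c else b, rfl, rfl, fun i hi => by
      obtain rfl : i = 0 := by omega
      simpa using hR⟩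

lemma IsWalk.hasWalk_segment (h : IsWalk R f m a b) {i j : ℕ} (hij : i ≤ j) (hjm : j ≤ m) :
    HasWalk R (j - i) (f i) (f j) := by
  refine ⟨fun k => f (i + k), by simp, by simp [Nat.add_sub_cancel' hij], fun k hk => ?_⟩
  simpa only [Nat.add_assoc] using h.2.2 (i + k) (by omega)

lemma IsWalk.hasWalk_excise (h : IsWalk R f m a b) {i j : ℕ} (hij : i < j) (hjm : j ≤ m)
    (heq : f i = f j) : HasWalk R (m - (j - i)) a b := by
  obtain ⟨rfl, rfl, hf⟩ := h
  refine ⟨fun k => if k ≤ i then f k else f (k + (j - i)), by simp, ?_, fun k hk => ?_⟩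
  · by_cases hmi : m - (j - i) ≤ i
    · obtain rfl : j = m := by omega
      simp only [show j - (j - i) = i by omega, le_refl, if_true, heq]
    · simp only [if_neg hmi, show m - (j - i) + (j - i) = m by omega]
  · dsimp only
    rcases lt_trichotomy (k + 1) (i + 1) with hlt | hki | hgt
    · rw [if_pos (by omega), if_pos (by omega)]
      exact hf k (by omega)
    · rw [if_pos (by omega), if_neg (by omega), show k = i by omega, heq,
        show i + 1 + (j - i) = j + 1 by omega]
      exact hf j (by omega)
    · rw [if_neg (by omega), if_neg (by omega), show k + 1 + (j - i) = k + (j - i) + 1 by omega]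
      exact hf _ (by omega)

lemma hasWalk_mul_iff {s d : ℕ} : HasWalk R (s * d) a b ↔ HasWalk (HasWalk R s) d a b := by
  induction d generalizing b with
  | zero => simp only [Nat.mul_zero, hasWalk_zero_iff]
  | succ d ih =>
    rw [hasWalk_succ_iff]
    constructor
    · rintro ⟨f, rfl, rfl, hf⟩
      refine ⟨f (s * d), ih.1 ⟨f, rfl, rfl, fun i hi => hf i ?_⟩, ?_⟩
      · nlinarith
      · simpa [Nat.mul_succ] using
          IsWalk.hasWalk_segment ⟨rfl, rfl, hf⟩ (Nat.mul_le_mul_left s d.le_succ) le_rfl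
    · rintro ⟨c, hw, hR⟩
      exact (ih.2 hw).trans hR

lemma hasWalk_of_le (hout : ∀ a, ∃ b, R a b) (h : ∀ a b, HasWalk R m a b) (hmm' : m ≤ m') :
    ∀ a b, HasWalk R m' a b := by
  induction m', hmm' using Nat.le_induction with
  | base => exact h
  | succ m' _ ih =>
    intro a b
    obtain ⟨c, hac⟩ := hout a
    simpa [Nat.add_comm] using
      (hasWalk_succ_iff.2 ⟨a, hasWalk_zero_iff.2 rfl, hac⟩).trans (ih c b)

section Fintype

variable [Fintype V]

lemma HasWalk.exists_cycle_of_card_le (hm : Fintype.card V ≤ m) (h : HasWalk R m a b) :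
    ∃ ℓ x, 0 < ℓ ∧ ℓ ≤ Fintype.card V ∧ HasWalk R ℓ x x ∧ HasWalk R (m - ℓ) a b := by
  obtain ⟨f, hf⟩ := h
  obtain ⟨i, j, hne, heq⟩ := Fintype.exists_ne_map_eq_of_card_lt
    (fun i : Fin (Fintype.card V + 1) => f i) (by simp)
  have hi := i.isLt
  have hj := j.isLt
  rcases Fin.lt_or_lt_of_ne hne with hij | hij
  · refine ⟨j - i, f i, by omega, by omega, ?_, hf.hasWalk_excise hij (by omega) heq⟩
    simpa only [heq] using hf.hasWalk_segment hij.le (by omega)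
  · refine ⟨i - j, f j, by omega, by omega, ?_, hf.hasWalk_excise hij (by omega) heq.symm⟩
    simpa only [heq] using hf.hasWalk_segment hij.le (by omega)

lemma HasWalk.exists_length_lt_card (h : HasWalk R m a b) :
    ∃ m' < Fintype.card V, HasWalk R m' a b := by
  induction m using Nat.strong_induction_on with
  | _ m ih =>
    have : 0 < Fintype.card V := Fintype.card_pos_iff.2 ⟨a⟩
    by_cases hm : m < Fintype.card V
    · exact ⟨m, hm, h⟩
    · obtain ⟨ℓ, -, hℓ, -, -, h'⟩ := h.exists_cycle_of_card_le (by omega)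
      exact ih (m - ℓ) (by omega) h'

/-- Cutting a simple cycle out of a closed walk removes exactly `#V` steps. -/
lemma card_dvd_of_forall_closed_le (hmin : ∀ m x, 0 < m → HasWalk R m x x → Fintype.card V ≤ m)
    {x : V} (hm : 0 < m) (h : HasWalk R m x x) : Fintype.card V ∣ m := by
  induction m using Nat.strong_induction_on with
  | _ m ih =>
    by_cases hmc : m ≤ Fintype.card V
    · rw [le_antisymm hmc (hmin m x hm h)]
    · obtain ⟨ℓ, y, hℓ, hℓc, hy, h'⟩ := h.exists_cycle_of_card_le (by omega)
      obtain rfl : ℓ = Fintype.card V := le_antisymm hℓc (hmin ℓ y hℓ hy)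
      rw [show m = m - Fintype.card V + Fintype.card V by omega]
      exact Nat.dvd_add (ih _ (by omega) (by omega) h') dvd_rfl

end Fintype

end Walk

section Wielandt

variable {V : Type*} {R : V → V → Prop} {s : ℕ} {c : ℕ → V}

structure IsShortestCycle (R : V → V → Prop) (s : ℕ) (c : ℕ → V) : Prop where
  pos : 0 < s
  rel : ∀ i, R (c i) (c (i + 1))
  periodic : Function.Periodic c s
  le_of_hasWalk : ∀ m x, 0 < m → HasWalk R m x x → s ≤ m

lemma exists_isShortestCycle (h : ∃ m x, 0 < m ∧ HasWalk R m x x) :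
    ∃ s c, IsShortestCycle R s c := by
  classical
  obtain ⟨x, hs, f, rfl, hfs, hf⟩ := Nat.find_spec h
  set s := Nat.find h
  refine ⟨s, fun i => f (i % s), ⟨hs, fun i => ?_, fun i => by simp,
    fun m y hm hy => Nat.find_min' h ⟨y, hm, hy⟩⟩⟩
  have hi : i % s < s := Nat.mod_lt i hs
  show R (f (i % s)) (f ((i + 1) % s))
  rw [← Nat.mod_add_mod i s 1]
  rcases (show i % s + 1 ≤ s from hi).lt_or_eq with hlt | heq
  · rw [Nat.mod_eq_of_lt hlt]
    exact hf _ hi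
  · have hlast := hf _ hi
    rw [heq, hfs] at hlast
    rwa [heq, Nat.mod_self]

namespace IsShortestCycle

lemma hasWalk (hc : IsShortestCycle R s c) (r ℓ : ℕ) : HasWalk R ℓ (c r) (c (r + ℓ)) :=
  hasWalk_of_forall_rel (f := fun i => c (r + i)) (fun i => hc.rel (r + i)) ℓ

lemma injOn (hc : IsShortestCycle R s c) : Set.InjOn c (Set.Iio s) := by
  intro i hi j hj hij
  by_contra hne
  wlog hlt : i < j generalizing i j
  · exact this hj hi hij.symm (Ne.symm hne) (by omega)
  have hw := hc.hasWalk i (j - i)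
  rw [Nat.add_sub_cancel' hlt.le, ← hij] at hw
  have := hc.le_of_hasWalk _ _ (by omega) hw
  simp only [Set.mem_Iio] at hj
  omega

variable [Fintype V]

lemma le_card (hc : IsShortestCycle R s c) : s ≤ Fintype.card V := by
  simpa using Finset.card_le_card_of_injOn (s := Finset.range s) c (fun _ _ => Finset.mem_univ _)
    (by simpa using hc.injOn)

/-- A shortest walk to the cycle visits distinct vertices off the cycle, so it has length at
most `#V - s`; it is then continued around the cycle. -/
lemma exists_hasWalk_card_sub (hc : IsShortestCycle R s c)
    (hreach : ∀ u, ∃ m, HasWalk R m u (c 0)) (u : V) :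
    ∃ r, HasWalk R (Fintype.card V - s) u (c r) := by
  classical
  have hT : ∃ t r, HasWalk R t u (c r) := let ⟨m, hm⟩ := hreach u; ⟨m, 0, hm⟩
  obtain ⟨r, g, hg0, hgt, hg⟩ := Nat.find_spec hT
  set t := Nat.find hT
  have hgw : IsWalk R g t u (c r) := ⟨hg0, hgt, hg⟩
  have hoff : ∀ i < t, ∀ r', g i ≠ c r' := fun i hi r' he =>
    Nat.find_min hT hi ⟨r', by simpa [he, hg0] using hgw.hasWalk_segment (Nat.zero_le i) hi.le⟩
  have hinj : Set.InjOn g (Set.Iio t) := by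
    intro i hi j hj hij
    by_contra hne
    wlog hlt : i < j generalizing i j
    · exact this hj hi hij.symm (Ne.symm hne) (by omega)
    simp only [Set.mem_Iio] at hj
    exact Nat.find_min hT (show t - (j - i) < t by omega)
      ⟨r, hgw.hasWalk_excise hlt hj.le hij⟩
  have hts : t + s ≤ Fintype.card V := by
    have hdisj : Disjoint ((Finset.range t).image g) ((Finset.range s).image c) := by
      simp only [Finset.disjoint_left, Finset.mem_image, Finset.mem_range]
      rintro _ ⟨i, hi, rfl⟩ ⟨r', -, he⟩
      exact hoff i hi r' he.symm
    calc t + s = ((Finset.range t).image g ∪ (Finset.range s).image c).card := by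
          rw [Finset.card_union_of_disjoint hdisj, Finset.card_image_of_injOn (by simpa using hinj),
            Finset.card_image_of_injOn (by simpa using hc.injOn), Finset.card_range,
            Finset.card_range]
      _ ≤ Fintype.card V := Finset.card_le_univ _
  refine ⟨r + (Fintype.card V - s - t), ?_⟩
  simpa [show t + (Fintype.card V - s - t) = Fintype.card V - s by omega] using
    (show HasWalk R t u (c r) from ⟨g, hgw⟩).trans (hc.hasWalk r (Fintype.card V - s - t))

/-- Every vertex of the cycle carries a loop of the relation "`s`-step walk", so walks of
that relation can be padded to length `#V - 1`. -/
lemma hasWalk_mul_card_sub_one (hc : IsShortestCycle R s c) {k : ℕ}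
    (hk : ∀ m, k ≤ m → ∀ a b, HasWalk R m a b) (r : ℕ) (b : V) :
    HasWalk R (s * (Fintype.card V - 1)) (c r) b := by
  obtain ⟨d, hd, hw⟩ := (hasWalk_mul_iff.1
    (hk (s * k) (Nat.le_mul_of_pos_left k hc.pos) (c r) b)).exists_length_lt_card
  have hloop : HasWalk (HasWalk R s) (Fintype.card V - 1 - d) (c r) (c r) :=
    hasWalk_of_forall_rel (f := fun _ => c r)
      (fun _ => by simpa [hc.periodic r] using hc.hasWalk r s) _
  exact hasWalk_mul_iff.2
    (by simpa [show Fintype.card V - 1 - d + d = Fintype.card V - 1 by omega] using hloop.trans hw)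

end IsShortestCycle

theorem hasWalk_wielandt [Fintype V] (hout : ∀ a, ∃ b, R a b)
    (hprim : ∃ k, ∀ a b, HasWalk R k a b) (a b : V) :
    HasWalk R ((Fintype.card V - 1) ^ 2 + 1) a b := by
  obtain ⟨k, hk⟩ := hprim
  have hk' : ∀ m, k ≤ m → ∀ a b, HasWalk R m a b := fun m hm => hasWalk_of_le hout hk hm
  obtain ⟨s, c, hc⟩ := exists_isShortestCycle ⟨k + 1, a, k.succ_pos, hk' _ k.le_succ a a⟩
  -- a shortest cycle of length `#V` would make every closed walk length a multiple of `#V`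
  have hs : s < Fintype.card V ∨ Fintype.card V ≤ 1 := by
    refine hc.le_card.lt_or_eq.imp_right fun heq => Nat.le_of_dvd one_pos ?_
    have hdvd : ∀ m, k < m → Fintype.card V ∣ m := fun m hm =>
      card_dvd_of_forall_closed_le (heq ▸ hc.le_of_hasWalk) (by omega) (hk' m hm.le a a)
    exact (Nat.dvd_add_right (hdvd (k + 1) k.lt_succ_self)).1 (hdvd (k + 1 + 1) (by omega))
  have hlen : Fintype.card V - s + s * (Fintype.card V - 1) ≤ (Fintype.card V - 1) ^ 2 + 1 := by
    have := hc.pos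
    rcases hs with hs | hs
    · obtain ⟨t, ht⟩ : ∃ t, Fintype.card V = s + t + 1 := ⟨Fintype.card V - s - 1, by omega⟩
      rw [ht, show s + t + 1 - s = t + 1 by omega, Nat.add_sub_cancel]
      nlinarith
    · have := hc.le_card
      rw [show Fintype.card V = 1 by omega, show s = 1 by omega]
      norm_num
  refine hasWalk_of_le hout (fun u v => ?_) hlen a b
  obtain ⟨r, hr⟩ := hc.exists_hasWalk_card_sub (fun u => ⟨k, hk u (c 0)⟩) u
  exact hr.trans (hc.hasWalk_mul_card_sub_one hk' r v)

end Wielandt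

section PrimitiveMatrix

variable {V S : Type*} [Fintype V] [DecidableEq V] [Ring S] [LinearOrder S]
  [IsStrictOrderedRing S] {M : Matrix V V S}

lemma hasWalk_iff_pow_apply_pos (hM : ∀ a b, 0 ≤ M a b) (m : ℕ) (a b : V) :
    HasWalk (fun x y => 0 < M x y) m a b ↔ 0 < (M ^ m) a b := by
  induction m generalizing b with
  | zero =>
    rw [hasWalk_zero_iff, pow_zero, Matrix.one_apply]
    split_ifs with h <;> simp [h]
  | succ m ih =>
    rw [hasWalk_succ_iff, pow_succ, Matrix.mul_apply, Finset.sum_pos_iff_of_nonneg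
      fun c _ => mul_nonneg (Matrix.pow_apply_nonneg hM m a c) (hM c b)]
    simp only [Finset.mem_univ, true_and, ih]
    exact exists_congr fun c => ⟨fun h => mul_pos h.1 h.2, fun h =>
      ⟨pos_of_mul_pos_left h (hM c b), pos_of_mul_pos_right h (Matrix.pow_apply_nonneg hM m a c)⟩⟩

theorem Matrix.IsPrimitive.pow_apply_pos (hM : M.IsPrimitive) {m : ℕ}
    (hm : (Fintype.card V - 1) ^ 2 + 1 ≤ m) (a b : V) : 0 < (M ^ m) a b := by
  obtain ⟨hnn, k, hk, hpos⟩ := hM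
  have hout : ∀ a, ∃ b, 0 < M a b := fun a => by
    have h := hpos a a
    rw [← Nat.succ_pred_eq_of_pos hk, pow_succ', Matrix.mul_apply, Finset.sum_pos_iff_of_nonneg
      fun c _ => mul_nonneg (hnn a c) (Matrix.pow_apply_nonneg hnn _ c a)] at h
    obtain ⟨c, -, hc⟩ := h
    exact ⟨c, pos_of_mul_pos_left hc (Matrix.pow_apply_nonneg hnn _ c a)⟩
  simp only [← hasWalk_iff_pow_apply_pos hnn] at hpos ⊢
  exact hasWalk_of_le hout (hasWalk_wielandt hout ⟨k, hpos⟩) hm a b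

end PrimitiveMatrix

open scoped Matrix

section ProjectiveMetric

variable {A : Type*} [Fintype A] [Nonempty A] {x y : A → ℝ}

lemma projMetric_le_log_iff (hx : ∀ a, 0 < x a) (hy : ∀ a, 0 < y a) {K : ℝ} (hK : 0 < K) :
    projMetric x y ≤ Real.log K ↔ ∀ a b, x a * y b ≤ K * (y a * x b) := by
  set r := fun a => x a / y a
  have hinf : 0 < Finset.univ.inf' Finset.univ_nonempty r :=
    (Finset.lt_inf'_iff _).2 fun a _ => div_pos (hx a) (hy a)
  have hsup := hinf.trans_le ((Finset.inf'_le _ (Finset.mem_univ (Classical.arbitrary A))).trans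
    (Finset.le_sup' r (Finset.mem_univ _)))
  have hcross : ∀ a b, x a * y b ≤ K * (y a * x b) ↔ r a ≤ K * r b := fun a b => by
    rw [mul_div_assoc', div_le_div_iff₀ (hy a) (hy b)]
    constructor <;> intro h <;> linarith
  rw [projMetric, Real.log_le_log_iff (div_pos hsup hinf) hK, div_le_iff₀ hinf]
  simp only [hcross]
  constructor
  · intro h a b
    exact (Finset.le_sup' r (Finset.mem_univ a)).trans (h.trans
      (mul_le_mul_of_nonneg_left (Finset.inf'_le r (Finset.mem_univ b)) hK.le))
  · intro h
    refine Finset.sup'_le _ _ fun a _ => (div_le_iff₀' hK).1 ?_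
    exact Finset.le_inf' _ _ fun b _ => (div_le_iff₀' hK).2 (h a b)

lemma mul_le_exp_projMetric_mul (hx : ∀ a, 0 < x a) (hy : ∀ a, 0 < y a) (a b : A) :
    x a * y b ≤ Real.exp (projMetric x y) * (y a * x b) :=
  (projMetric_le_log_iff hx hy (Real.exp_pos _)).1 (Real.log_exp _).ge a b

lemma projMetric_nonneg (hx : ∀ a, 0 < x a) (hy : ∀ a, 0 < y a) : 0 ≤ projMetric x y := by
  inhabit A
  have h := mul_le_exp_projMetric_mul hx hy default default
  have hxy := mul_pos (hx default) (hy default)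
  rw [← Real.one_le_exp_iff]
  nlinarith

lemma projMetric_smul_right (hx : ∀ a, 0 < x a) (hy : ∀ a, 0 < y a) {t : ℝ} (ht : 0 < t) :
    projMetric x (t • y) = projMetric x y := by
  have hty : ∀ a, 0 < (t • y) a := fun a => mul_pos ht (hy a)
  have key : ∀ K, 0 < K → (projMetric x (t • y) ≤ Real.log K ↔ projMetric x y ≤ Real.log K) := by
    intro K hK
    rw [projMetric_le_log_iff hx hty hK, projMetric_le_log_iff hx hy hK]
    refine forall₂_congr fun a b => ?_
    simp only [Pi.smul_apply, smul_eq_mul]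
    rw [show x a * (t * y b) = t * (x a * y b) by ring,
      show K * (t * y a * x b) = t * (K * (y a * x b)) by ring, mul_le_mul_iff_right₀ ht]
  exact le_antisymm (by simpa using (key _ (Real.exp_pos (projMetric x y))).2 (by simp))
    (by simpa using (key _ (Real.exp_pos (projMetric x (t • y)))).1 (by simp))

lemma linearIndependent_of_projMetric_pos (hx : ∀ a, 0 < x a) (hy : ∀ a, 0 < y a)
    (h : 0 < projMetric x y) : LinearIndependent ℝ ![x, y] := by
  obtain ⟨a, b, hab⟩ : ∃ a b, y a * x b < x a * y b := by
    by_contra! hle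
    have := (projMetric_le_log_iff hx hy one_pos).2 fun a b => by simpa using hle a b
    rw [Real.log_one] at this
    linarith
  rw [LinearIndependent.pair_iff]
  intro s t hst
  have ha := congrFun hst a
  have hb := congrFun hst b
  simp only [Pi.add_apply, Pi.smul_apply, smul_eq_mul, Pi.zero_apply] at ha hb
  have hs : s * (x a * y b - y a * x b) = 0 := by linear_combination y b * ha - y a * hb
  obtain rfl := (mul_eq_zero.1 hs).resolve_right (by linarith)
  exact ⟨rfl, by simpa [(hy a).ne'] using ha⟩

lemma projMetric_vecMul_le_sup [DecidableEq A] {N : Matrix A A ℝ} {α v : A → ℝ}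
    (hN : ∀ a b, 0 < N a b) (hα : ∀ a, 0 < α a) (hv : ∀ a, 0 ≤ v a) (hvN : ∀ b, 0 < (v ᵥ* N) b) :
    projMetric (v ᵥ* N) α ≤
      Finset.univ.sup' Finset.univ_nonempty fun b => projMetric (Pi.single b 1 ᵥ* N) α := by
  set D := Finset.univ.sup' Finset.univ_nonempty fun b => projMetric (Pi.single b 1 ᵥ* N) α
  have hrow : ∀ b c c', N b c * α c' ≤ Real.exp D * (α c * N b c') := fun b c c' => by
    have hd : projMetric (Pi.single b 1 ᵥ* N) α ≤ D :=
      Finset.le_sup' (fun b => projMetric (Pi.single b 1 ᵥ* N) α) (Finset.mem_univ b)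
    have hrowpos : ∀ c, 0 < (Pi.single b 1 ᵥ* N) c := fun c => by
      rw [Matrix.single_one_vecMul]
      exact hN b c
    have h := mul_le_exp_projMetric_mul hrowpos hα c c'
    rw [Matrix.single_one_vecMul] at h hd
    exact h.trans (mul_le_mul_of_nonneg_right (Real.exp_le_exp.2 hd) (mul_pos (hα c) (hN b c')).le)
  rw [← Real.log_exp D, projMetric_le_log_iff hvN hα (Real.exp_pos D)]
  intro c c'
  simp only [Matrix.vecMul, dotProduct, Finset.sum_mul, Finset.mul_sum]
  exact Finset.sum_le_sum fun b _ => by nlinarith [hrow b c c', hv b]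

lemma l1norm_div_sub_div_le (hx : ∀ a, 0 < x a) (hy : ∀ a, 0 < y a) :
    l1norm (fun b => x b / l1norm x - y b / l1norm y) ≤ Real.exp (projMetric x y) - 1 := by
  set K := Real.exp (projMetric x y)
  have hK : 1 ≤ K := Real.one_le_exp_iff.2 (projMetric_nonneg hx hy)
  have hl1 : ∀ z : A → ℝ, (∀ a, 0 < z a) → l1norm z = ∑ a, z a :=
    fun z hz => Finset.sum_congr rfl fun a _ => abs_of_pos (hz a)
  have hS : 0 < ∑ a, x a := Finset.sum_pos (fun a _ => hx a) Finset.univ_nonempty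
  have hT : 0 < ∑ a, y a := Finset.sum_pos (fun a _ => hy a) Finset.univ_nonempty
  have hterm : ∀ a b, |x b * y a - y b * x a| ≤ (K - 1) * y b * x a := fun a b => by
    have h1 := mul_le_exp_projMetric_mul hx hy b a
    have h2 := mul_le_exp_projMetric_mul hx hy a b
    have := mul_pos (hx a) (hy b)
    rw [abs_le]
    constructor <;> nlinarith
  have hb : ∀ b, |x b / ∑ a, x a - y b / ∑ a, y a| ≤ (K - 1) * (y b / ∑ a, y a) := fun b => by
    have hnum : |x b * ∑ a, y a - (∑ a, x a) * y b| ≤ (K - 1) * y b * ∑ a, x a := by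
      rw [Finset.mul_sum, Finset.mul_sum, Finset.sum_mul, ← Finset.sum_sub_distrib]
      refine (Finset.abs_sum_le_sum_abs _ _).trans (Finset.sum_le_sum fun a _ => ?_)
      simpa [mul_comm] using hterm a b
    rw [div_sub_div _ _ hS.ne' hT.ne', abs_div, abs_of_pos (mul_pos hS hT),
      div_le_iff₀ (mul_pos hS hT)]
    calc _ ≤ (K - 1) * y b * ∑ a, x a := hnum
      _ = (K - 1) * (y b / ∑ a, y a) * ((∑ a, x a) * ∑ a, y a) := by field_simp
  rw [hl1 x hx, hl1 y hy]
  calc l1norm (fun b => x b / ∑ a, x a - y b / ∑ a, y a)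
      ≤ ∑ b, (K - 1) * (y b / ∑ a, y a) := Finset.sum_le_sum fun b _ => hb b
    _ = K - 1 := by rw [← Finset.mul_sum, ← Finset.sum_div, div_self hT.ne', mul_one]

end ProjectiveMetric

section Birkhoff

variable {A : Type*} [Fintype A] {N : Matrix A A ℝ} {x y : A → ℝ}

/-- Pairing the terms of index `(a, a')` and `(a', a)` in the expansion of `(xN)_b (yN)_b'`
leaves a sum of products of two nonnegative factors. -/
lemma crossRatio_vecMul_le {φ β : ℝ} (hφ : ∀ a a' b b', φ * (N a' b * N a b') ≤ N a b * N a' b')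
    (hβ : ∀ a a', x a * y a' ≤ β * (y a * x a')) (b b' : A) :
    (1 + β * φ) * ((x ᵥ* N) b * (y ᵥ* N) b') ≤ (β + φ) * ((y ᵥ* N) b * (x ᵥ* N) b') := by
  set T : A × A → ℝ := fun p => (β + φ) * (y p.1 * N p.1 b * (x p.2 * N p.2 b')) -
    (1 + β * φ) * (x p.1 * N p.1 b * (y p.2 * N p.2 b'))
  have hpair : ∀ p : A × A, 0 ≤ T p + T p.swap := by
    rintro ⟨a, a'⟩
    have h1 := mul_nonneg (sub_nonneg.2 (hβ a a')) (sub_nonneg.2 (hφ a a' b b'))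
    have h2 := mul_nonneg (sub_nonneg.2 (hβ a' a)) (sub_nonneg.2 (hφ a' a b b'))
    simp only [T, Prod.fst_swap, Prod.snd_swap]
    linarith
  have hswap : ∑ p : A × A, T p.swap = ∑ p, T p :=
    Fintype.sum_equiv (Equiv.prodComm A A) _ _ fun _ => rfl
  have hsum : 0 ≤ ∑ p, T p := by
    have : 0 ≤ ∑ p : A × A, (T p + T p.swap) := Finset.sum_nonneg fun p _ => hpair p
    rw [Finset.sum_add_distrib, hswap] at this
    linarith
  have hexpand : ∀ u w : A → ℝ,
      (u ᵥ* N) b * (w ᵥ* N) b' = ∑ p : A × A, u p.1 * N p.1 b * (w p.2 * N p.2 b') :=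
    fun u w => by simp only [Matrix.vecMul, dotProduct, Finset.sum_mul_sum, Fintype.sum_prod_type]
  rw [hexpand x y, hexpand y x, Finset.mul_sum, Finset.mul_sum]
  simp only [T, Finset.sum_sub_distrib] at hsum
  linarith

/-- The difference of the two sides vanishes at `β = 1` and has nonnegative derivative
`φ (1 - φ) (β - 1)² / ((1 + φ) β (β + φ) (1 + φβ))`. -/
lemma log_div_le_mul_log {φ β : ℝ} (hφ0 : 0 < φ) (hφ1 : φ ≤ 1) (hβ : 1 ≤ β) :
    Real.log ((β + φ) / (1 + β * φ)) ≤ (1 - φ) / (1 + φ) * Real.log β := by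
  set c := (1 - φ) / (1 + φ)
  set F : ℝ → ℝ := fun u => c * Real.log u - Real.log (u + φ) + Real.log (1 + φ * u)
  have hder : ∀ u : ℝ, 1 ≤ u →
      HasDerivAt F (c * u⁻¹ - (u + φ)⁻¹ + (1 + φ * u)⁻¹ * φ) u := by
    intro u hu
    have h1 := (Real.hasDerivAt_log (show u ≠ 0 by positivity)).const_mul c
    have h2 := ((hasDerivAt_id u).add_const φ).log (show u + φ ≠ 0 by positivity)
    have h3 := (((hasDerivAt_id u).const_mul φ).const_add 1).log
      (show 1 + φ * u ≠ 0 by positivity)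
    simp only [id, mul_one, one_div] at h2 h3
    exact ((h1.sub h2).add h3).congr_deriv (by ring)
  have hmono : MonotoneOn F (Set.Ici 1) := by
    refine monotoneOn_of_deriv_nonneg (convex_Ici 1)
      (fun u hu => (hder u hu).continuousAt.continuousWithinAt)
      (fun u hu => ?_) (fun u hu => ?_) <;> rw [interior_Ici] at hu
    · exact (hder u hu.le).differentiableAt.differentiableWithinAt
    · have hu' : (1 : ℝ) < u := hu
      rw [(hder u hu'.le).deriv, show c * u⁻¹ - (u + φ)⁻¹ + (1 + φ * u)⁻¹ * φ =
          φ * (1 - φ) * (u - 1) ^ 2 / ((1 + φ) * u * (u + φ) * (1 + φ * u)) by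
        simp only [c]
        field_simp
        ring]
      have : 0 ≤ 1 - φ := by linarith
      positivity
  have hF := hmono (Set.mem_Ici.2 le_rfl) (Set.mem_Ici.2 hβ) hβ
  simp only [F, Real.log_one, mul_zero, mul_one, zero_sub, add_comm (1 : ℝ) φ,
    neg_add_cancel] at hF
  rw [Real.log_div (by positivity) (by positivity), mul_comm β φ]
  linarith

variable [Nonempty A]

lemma vecMul_pos (hx : ∀ a, 0 < x a) (hN : ∀ a b, 0 < N a b) (b : A) : 0 < (x ᵥ* N) b :=
  Finset.sum_pos (fun a _ => mul_pos (hx a) (hN a b)) Finset.univ_nonempty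

lemma exists_crossRatio_ge (hN : ∀ a b, 0 < N a b) :
    ∃ φ, 0 < φ ∧ φ ≤ 1 ∧ ∀ a a' b b', φ * (N a' b * N a b') ≤ N a b * N a' b' := by
  set φ := Finset.univ.inf' Finset.univ_nonempty fun q : (A × A) × A × A =>
    N q.1.1 q.2.1 * N q.1.2 q.2.2 / (N q.1.2 q.2.1 * N q.1.1 q.2.2)
  have hφ : ∀ a a' b b', φ * (N a' b * N a b') ≤ N a b * N a' b' := fun a a' b b' =>
    (le_div_iff₀ (mul_pos (hN _ _) (hN _ _))).1
      (Finset.inf'_le _ (Finset.mem_univ ((a, a'), (b, b'))))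
  have hpos : 0 < φ := (Finset.lt_inf'_iff _).2 fun q _ =>
    div_pos (mul_pos (hN _ _) (hN _ _)) (mul_pos (hN _ _) (hN _ _))
  inhabit A
  have h := hφ default default default default
  have hN2 := mul_pos (hN default default) (hN default default)
  exact ⟨φ, hpos, by nlinarith, hφ⟩

lemma projMetric_vecMul_le_mul {φ : ℝ} (hN : ∀ a b, 0 < N a b) (hφ0 : 0 < φ) (hφ1 : φ ≤ 1)
    (hφ : ∀ a a' b b', φ * (N a' b * N a b') ≤ N a b * N a' b')
    (hx : ∀ a, 0 < x a) (hy : ∀ a, 0 < y a) :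
    projMetric (x ᵥ* N) (y ᵥ* N) ≤ (1 - φ) / (1 + φ) * projMetric x y := by
  set β := Real.exp (projMetric x y)
  have hβ : 1 ≤ β := Real.one_le_exp_iff.2 (projMetric_nonneg hx hy)
  have hden : 0 < 1 + β * φ := by positivity
  calc projMetric (x ᵥ* N) (y ᵥ* N) ≤ Real.log ((β + φ) / (1 + β * φ)) := by
        rw [projMetric_le_log_iff (vecMul_pos hx hN) (vecMul_pos hy hN) (by positivity)]
        intro b b'
        rw [div_mul_eq_mul_div, le_div_iff₀ hden]
        linarith [crossRatio_vecMul_le hφ (mul_le_exp_projMetric_mul hx hy) b b']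
    _ ≤ (1 - φ) / (1 + φ) * Real.log β := log_div_le_mul_log hφ0 hφ1 hβ
    _ = (1 - φ) / (1 + φ) * projMetric x y := by rw [Real.log_exp]

lemma exists_projMetric_vecMul_le (hN : ∀ a b, 0 < N a b) :
    ∃ c, 0 ≤ c ∧ c < 1 ∧ ∀ x y : A → ℝ, (∀ a, 0 < x a) → (∀ a, 0 < y a) →
      projMetric (x ᵥ* N) (y ᵥ* N) ≤ c * projMetric x y := by
  obtain ⟨φ, hφ0, hφ1, hφ⟩ := exists_crossRatio_ge hN
  refine ⟨(1 - φ) / (1 + φ), div_nonneg (by linarith) (by linarith),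
    (div_lt_one (by linarith)).2 (by linarith),
    fun x y hx hy => projMetric_vecMul_le_mul hN hφ0 hφ1 hφ hx hy⟩

lemma birkhoff_nonneg (hN : ∀ a b, 0 < N a b) : 0 ≤ birkhoff N :=
  Real.sSup_nonneg fun _ ⟨_, _, hx, hy, _, hr⟩ => hr ▸
    div_nonneg (projMetric_nonneg (vecMul_pos hx hN) (vecMul_pos hy hN)) (projMetric_nonneg hx hy)

lemma birkhoff_lt_one (hN : ∀ a b, 0 < N a b) : birkhoff N < 1 := by
  obtain ⟨c, hc0, hc1, hc⟩ := exists_projMetric_vecMul_le hN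
  exact lt_of_le_of_lt (Real.sSup_le (fun _ ⟨x, y, hx, hy, _, hr⟩ => hr ▸
    div_le_of_le_mul₀ (projMetric_nonneg hx hy) hc0 (hc x y hx hy)) hc0) hc1

lemma projMetric_vecMul_le_birkhoff_mul (hN : ∀ a b, 0 < N a b) (hx : ∀ a, 0 < x a)
    (hy : ∀ a, 0 < y a) : projMetric (x ᵥ* N) (y ᵥ* N) ≤ birkhoff N * projMetric x y := by
  obtain ⟨c, hc0, -, hc⟩ := exists_projMetric_vecMul_le hN
  rcases (projMetric_nonneg hx hy).eq_or_lt with h0 | hpos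
  · simpa [← h0] using hc x y hx hy
  · have hle : projMetric (x ᵥ* N) (y ᵥ* N) / projMetric x y ≤ birkhoff N :=
      le_csSup ⟨c, fun _ ⟨x, y, hx, hy, _, hr⟩ => hr ▸
        div_le_of_le_mul₀ (projMetric_nonneg hx hy) hc0 (hc x y hx hy)⟩
        ⟨x, y, hx, hy, linearIndependent_of_projMetric_pos hx hy hpos, rfl⟩
    rwa [div_le_iff₀ hpos] at hle

lemma projMetric_vecMul_pow_le [DecidableEq A] (hN : ∀ a b, 0 < N a b) (hx : ∀ a, 0 < x a)
    (hy : ∀ a, 0 < y a) (j : ℕ) :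
    projMetric (x ᵥ* (N ^ j)) (y ᵥ* (N ^ j)) ≤ birkhoff N ^ j * projMetric x y := by
  induction j generalizing x y with
  | zero => simp
  | succ j ih =>
    rw [pow_succ', ← Matrix.vecMul_vecMul, ← Matrix.vecMul_vecMul, pow_succ, mul_assoc]
    exact (ih (vecMul_pos hx hN) (vecMul_pos hy hN)).trans (mul_le_mul_of_nonneg_left
      (projMetric_vecMul_le_birkhoff_mul hN hx hy) (pow_nonneg (birkhoff_nonneg hN) j))

end Birkhoff

section Substitution

variable {A : Type*} [DecidableEq A] (σ : A → List A)

/-- The Parikh vector `comp(w)` of a word. -/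
def parikh (w : List A) : A → ℝ := fun b => (w.count b : ℝ)

lemma parikh_append (u w : List A) : parikh (u ++ w) = parikh u + parikh w := by
  ext b
  simp [parikh, List.count_append]

lemma parikh_singleton (a : A) : parikh [a] = Pi.single a 1 := by
  ext b
  by_cases h : b = a
  · subst h
    simp [parikh]
  · simp [parikh, h, Ne.symm h]

variable [Fintype A]

lemma parikh_substWord (w : List A) : parikh (substWord σ w) = parikh w ᵥ* incMatrixR σ := by
  induction w with
  | nil => ext; simp [parikh, substWord, Matrix.vecMul, dotProduct]
  | cons a w ih =>
    rw [show substWord σ (a :: w) = σ a ++ substWord σ w from List.flatMap_cons,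
      parikh_append, ih, show a :: w = [a] ++ w from rfl, parikh_append, Matrix.add_vecMul,
      parikh_singleton, Matrix.single_one_vecMul]
    rfl

lemma parikh_substPow (p : ℕ) (w : List A) :
    parikh (substPow σ p w) = parikh w ᵥ* (incMatrixR σ ^ p) := by
  induction p with
  | zero => simp [substPow]
  | succ p ih =>
    rw [substPow, Function.iterate_succ_apply', ← substPow, parikh_substWord, ih,
      Matrix.vecMul_vecMul, pow_succ]

lemma incMatrixR_pow_apply (p : ℕ) (a b : A) :
    (incMatrixR σ ^ p) a b = (substPow σ p [a]).count b := by
  simpa [parikh_singleton, parikh] using (congrFun (parikh_substPow σ p [a]) b).symm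

lemma l1norm_parikh (w : List A) : l1norm (parikh w) = w.length := by
  simp only [l1norm, parikh, Nat.abs_cast]
  rw [← List.sum_toFinset_count_eq_length, Nat.cast_sum]
  exact (Finset.sum_subset (Finset.subset_univ _) fun b _ hb => by
    simp [List.count_eq_zero_of_not_mem (by simpa using hb)]).symm

lemma incMatrixR_isPrimitive (hσ : ∀ a, σ a ≠ []) (hprim : IsPrimitiveSubst σ) :
    (incMatrixR σ).IsPrimitive := by
  obtain ⟨k, hk⟩ := hprim
  refine ⟨fun a b => Nat.cast_nonneg _, k + 1, k.succ_pos, fun a b => ?_⟩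
  obtain ⟨c, hc⟩ := List.exists_mem_of_ne_nil _ (hσ a)
  rw [pow_succ', Matrix.mul_apply]
  refine Finset.sum_pos' (fun d _ => mul_nonneg (Nat.cast_nonneg _)
    (by rw [incMatrixR_pow_apply]; positivity)) ⟨c, Finset.mem_univ c, mul_pos ?_ ?_⟩
  · exact Nat.cast_pos.2 (List.count_pos_iff.2 hc)
  · rw [incMatrixR_pow_apply]
    exact Nat.cast_pos.2 (List.count_pos_iff.2 (hk b c))

end Substitution

section PerronEstimate

variable {A : Type*} [Fintype A] [DecidableEq A] {M : Matrix A A ℝ} {α : A → ℝ} {lam : ℝ}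

lemma vecMul_pow_eq_smul (heig : α ᵥ* M = lam • α) (j : ℕ) : α ᵥ* (M ^ j) = lam ^ j • α := by
  induction j with
  | zero => simp
  | succ j ih =>
    rw [pow_succ, ← Matrix.vecMul_vecMul, ih, Matrix.smul_vecMul, heig, smul_smul, pow_succ]

variable [Nonempty A]

/-- Write `n = (n mod n₀ + n₀) + n₀ (⌊n/n₀⌋ - 1)`: after the first block the row is no
farther from `α` than the farthest row of `M^{n₀}`, and each later block of `n₀` steps
contracts by `τ_B(M^{n₀})` while fixing `α` projectively. -/
lemma projMetric_single_vecMul_pow_le {n₀ : ℕ} (hn₀ : 0 < n₀)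
    (hpos : ∀ m, n₀ ≤ m → ∀ a b, 0 < (M ^ m) a b) (hM : ∀ a b, 0 ≤ M a b)
    (hα : ∀ a, 0 < α a) (heig : α ᵥ* M = lam • α) (a : A) {n : ℕ} (hn : 2 * n₀ ≤ n) :
    projMetric (Pi.single a 1 ᵥ* (M ^ n)) α ≤ birkhoff (M ^ n₀) ^ (n / n₀ - 1) *
      Finset.univ.sup' Finset.univ_nonempty fun b => projMetric (Pi.single b 1 ᵥ* (M ^ n₀)) α := by
  set N := M ^ n₀
  set j := n / n₀ - 1
  have hN : ∀ a b, 0 < N a b := hpos n₀ le_rfl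
  have hj : 1 ≤ j := Nat.le_sub_of_add_le ((Nat.le_div_iff_mul_le hn₀).2 (by linarith))
  have hsplit : n = n % n₀ + n₀ + n₀ * j := by
    have := Nat.div_add_mod n n₀
    rw [show n₀ * (n / n₀) = n₀ * j + n₀ by rw [← Nat.mul_succ]; congr 1; omega] at this
    omega
  set x₀ := Pi.single a 1 ᵥ* (M ^ (n % n₀ + n₀)) with hx₀def
  have hx₀ : ∀ b, 0 < x₀ b := fun b => by
    rw [hx₀def, Matrix.single_one_vecMul]
    exact hpos _ (by omega) a b
  have hxn : Pi.single a 1 ᵥ* (M ^ n) = x₀ ᵥ* (N ^ j) := by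
    rw [Matrix.vecMul_vecMul, ← pow_mul, ← pow_add, ← hsplit]
  have hαn : α ᵥ* (N ^ j) = lam ^ (n₀ * j) • α := by
    rw [← pow_mul]
    exact vecMul_pow_eq_smul heig _
  have hlam : 0 < lam ^ (n₀ * j) := by
    inhabit A
    have h := vecMul_pos hα (hpos (n₀ * j) (Nat.le_mul_of_pos_right n₀ hj)) default
    rw [vecMul_pow_eq_smul heig, Pi.smul_apply, smul_eq_mul] at h
    exact pos_of_mul_pos_left h (hα default).le
  have hstart : projMetric x₀ α ≤
      Finset.univ.sup' Finset.univ_nonempty fun b => projMetric (Pi.single b 1 ᵥ* N) α := by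
    have hx₀N : x₀ = (Pi.single a 1 ᵥ* (M ^ (n % n₀))) ᵥ* N := by
      rw [Matrix.vecMul_vecMul, ← pow_add]
    rw [hx₀N] at hx₀ ⊢
    refine projMetric_vecMul_le_sup hN hα (fun b => ?_) hx₀
    rw [Matrix.single_one_vecMul]
    exact Matrix.pow_apply_nonneg hM _ a b
  have hxpos : ∀ b, 0 < (x₀ ᵥ* (N ^ j)) b := fun b => by
    rw [← hxn, Matrix.single_one_vecMul]
    exact hpos n (by omega) a b
  calc projMetric (Pi.single a 1 ᵥ* (M ^ n)) α
      = projMetric (x₀ ᵥ* (N ^ j)) (α ᵥ* (N ^ j)) := by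
        rw [hxn, hαn, projMetric_smul_right hxpos hα hlam]
    _ ≤ birkhoff N ^ j * projMetric x₀ α := projMetric_vecMul_pow_le hN hx₀ hα j
    _ ≤ _ := mul_le_mul_of_nonneg_left hstart (pow_nonneg (birkhoff_nonneg hN) j)

lemma l1norm_parikh_div_sub_le {σ : A → List A} {n₀ : ℕ} (hn₀ : 0 < n₀)
    (hpos : ∀ m, n₀ ≤ m → ∀ a b, 0 < (incMatrixR σ ^ m) a b) (hα : ∀ a, 0 < α a)
    (heig : α ᵥ* incMatrixR σ = lam • α) (a : A) {n : ℕ} (hn : 2 * n₀ ≤ n) :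
    l1norm (fun b => ((substPow σ n [a]).count b : ℝ) / ((substPow σ n [a]).length : ℝ)
        - α b / l1norm α) ≤
      Real.exp (birkhoff (incMatrixR σ ^ n₀) ^ (n / n₀ - 1) * Finset.univ.sup'
        Finset.univ_nonempty fun b => projMetric (Pi.single b 1 ᵥ* (incMatrixR σ ^ n₀)) α) - 1 := by
  have hcomp : parikh (substPow σ n [a]) = Pi.single a 1 ᵥ* (incMatrixR σ ^ n) := by
    rw [parikh_substPow, parikh_singleton]
  have hx : ∀ b, 0 < parikh (substPow σ n [a]) b := fun b => by
    rw [hcomp, Matrix.single_one_vecMul]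
    exact hpos n (by omega) a b
  calc _ = l1norm (fun b => parikh (substPow σ n [a]) b / l1norm (parikh (substPow σ n [a]))
          - α b / l1norm α) := by rw [l1norm_parikh]; rfl
    _ ≤ Real.exp (projMetric (parikh (substPow σ n [a])) α) - 1 := l1norm_div_sub_div_le hx hα
    _ ≤ _ := by
      rw [hcomp]
      gcongr
      exact projMetric_single_vecMul_pow_le hn₀ hpos (fun _ _ => Nat.cast_nonneg _) hα heig a hn

end PerronEstimate

lemma antitone_exp_mul_pow_sub_one {D τ : ℝ} (hD : 0 ≤ D) (hτ0 : 0 ≤ τ) (hτ1 : τ ≤ 1) (p : ℕ) :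
    Antitone fun n : ℕ => Real.exp (D * τ ^ (n / p - 1)) - 1 := fun m n hmn => by
  dsimp only
  gcongr Real.exp (D * ?_) - 1
  exact pow_le_pow_of_le_one hτ0 hτ1 (Nat.sub_le_sub_right (Nat.div_le_div_right hmn) 1)

lemma tendsto_exp_mul_pow_sub_one {D τ : ℝ} (hτ0 : 0 ≤ τ) (hτ1 : τ < 1) {p : ℕ} (hp : p ≠ 0) :
    Tendsto (fun n : ℕ => Real.exp (D * τ ^ (n / p - 1)) - 1) atTop (nhds 0) := by
  have hpow := (tendsto_pow_atTop_nhds_zero_of_lt_one hτ0 hτ1).comp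
    ((tendsto_sub_atTop_nat 1).comp (Nat.tendsto_div_const_atTop hp))
  have hc : Continuous fun t => Real.exp (D * t) - 1 := by fun_prop
  have h := (hc.tendsto 0).comp hpow
  rwa [mul_zero, Real.exp_zero, sub_self] at h

theorem stmt_11_general (A : Type*) [Fintype A] [DecidableEq A] [Nonempty A]
    (σ : A → List A) (hσne : ∀ a, σ a ≠ [])
    (hprim : IsPrimitiveSubst σ)
    (lam : ℝ) (α : A → ℝ) (hα : ∀ a, 0 < α a)
    (heig : Matrix.vecMul α (incMatrixR σ) = lam • α)
    (n₀ : ℕ) (hn₀ : n₀ = Fintype.card A ^ 2 - 2 * Fintype.card A + 2)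
    (B : ℕ → ℝ)
    (hB : ∀ n : ℕ, B n =
      Real.exp (Finset.univ.sup' Finset.univ_nonempty fun b =>
          projMetric (Matrix.vecMul (Pi.single b 1) ((incMatrixR σ) ^ n₀)) α) ^
        (birkhoff ((incMatrixR σ) ^ n₀) ^ (n / n₀ - 1)) - 1) :
    (∀ (a : A) (n : ℕ), 2 * n₀ ≤ n →
        l1norm (fun b => ((substPow σ n [a]).count b : ℝ) / ((substPow σ n [a]).length : ℝ)
            - α b / l1norm α) ≤ B n) ∧
    Antitone B ∧ Filter.Tendsto B Filter.atTop (nhds 0) := by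
  set M := incMatrixR σ
  have hwiel : (Fintype.card A - 1) ^ 2 + 1 ≤ n₀ := by
    obtain ⟨k, hk⟩ := Nat.exists_eq_succ_of_ne_zero (Fintype.card_ne_zero (α := A))
    rw [hn₀, hk, Nat.succ_sub_one, Nat.succ_eq_add_one, add_sq]
    omega
  have hpos : ∀ m, n₀ ≤ m → ∀ a b, 0 < (M ^ m) a b := fun m hm =>
    (incMatrixR_isPrimitive σ hσne hprim).pow_apply_pos (hwiel.trans hm)
  have hN := hpos n₀ le_rfl
  set D := Finset.univ.sup' Finset.univ_nonempty fun b => projMetric (Pi.single b 1 ᵥ* (M ^ n₀)) α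
  have hD : 0 ≤ D := Finset.le_sup'_of_le _ (Finset.mem_univ (Classical.arbitrary A))
    (projMetric_nonneg (fun c => by rw [Matrix.single_one_vecMul]; exact hN _ c) hα)
  have hBeq : B = fun n => Real.exp (D * birkhoff (M ^ n₀) ^ (n / n₀ - 1)) - 1 :=
    funext fun n => by rw [hB, Real.exp_mul]
  refine ⟨fun a n hn => ?_,
    hBeq ▸ antitone_exp_mul_pow_sub_one hD (birkhoff_nonneg hN) (birkhoff_lt_one hN).le n₀,
    hBeq ▸ tendsto_exp_mul_pow_sub_one (birkhoff_nonneg hN) (birkhoff_lt_one hN) (by omega)⟩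
  rw [hBeq]
  dsimp only
  rw [mul_comm D]
  exact l1norm_parikh_div_sub_le (by omega) hpos hα heig a hn

/-- Inequality (4.4): for `n ≥ 2n₀`, the ℓ¹ distance between the normalized letter-count
vector of `σⁿ(a)` and the normalized left Perron eigenvector `α` is at most
`exp(max_b d(e_b M^{n₀}, α))^{τ_B(M^{n₀})^{⌊n/n₀⌋−1}} − 1`, a bound which monotonically
decreases to zero. -/
theorem stmt_11 (A : Type*) [Fintype A] [DecidableEq A] [Nonempty A]
    (h2 : 2 ≤ Fintype.card A)
    (σ : A → List A) (hσne : ∀ a, σ a ≠ [])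
    (hprim : IsPrimitiveSubst σ)
    (lam : ℝ) (α : A → ℝ) (hα : ∀ a, 0 < α a)
    (heig : Matrix.vecMul α (incMatrixR σ) = lam • α)
    (n₀ : ℕ) (hn₀ : n₀ = Fintype.card A ^ 2 - 2 * Fintype.card A + 2)
    (B : ℕ → ℝ)
    (hB : ∀ n : ℕ, B n =
      Real.exp (Finset.univ.sup' Finset.univ_nonempty fun b =>
          projMetric (Matrix.vecMul (Pi.single b 1) ((incMatrixR σ) ^ n₀)) α) ^
        (birkhoff ((incMatrixR σ) ^ n₀) ^ (n / n₀ - 1)) - 1) :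
    (∀ (a : A) (n : ℕ), 2 * n₀ ≤ n →
        l1norm (fun b => ((substPow σ n [a]).count b : ℝ) / ((substPow σ n [a]).length : ℝ)
            - α b / l1norm α) ≤ B n) ∧
    Antitone B ∧ Filter.Tendsto B Filter.atTop (nhds 0) :=
  stmt_11_general A σ hσne hprim lam α hα heig n₀ hn₀ B hB
end

section
/- The fixed point u is uniformly recurrent: for every word w ∈ L(u) there exists g ∈ ℕ such that every interval of length g contained in ℤ₊ includes an occurrence of w in u; moreover one may take g = 2·max_{a∈A}|σⁿ(a)| for any n ∈ ℕ such that w occurs in σⁿ(a) for every a ∈ A (such n exists by primitivity). -/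
open List Filter

/-!
Write `u = σⁿ(u₀) σⁿ(u₁) σⁿ(u₂) ⋯`. The blocks have length at most `Sₙ = max_a |σⁿ(a)|`, so
every window of length `2 Sₙ` contains a complete block `σⁿ(u_j)`; hence a word occurring in every
`σⁿ(a)` occurs in every such window. Such an `n` exists for each factor `w` of `u`: by primitivity
and `#A ≥ 2` every `σᵏ(a)` has length at least 2, so the prefixes `σ^p(u₀)` of `u` grow without
bound and eventually contain `w`, while `u₀` occurs in every `σᵏ(a)`, so `w` occurs in every
`σ^(p+k)(a)`.
-/

section UniformRecurrence

variable {A : Type*}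

lemma length_seg (u : ℕ → A) (i j : ℕ) : (seg u i j).length = j - i := by
  simp [seg]

lemma seg_append_seg (u : ℕ → A) {i j k : ℕ} (hij : i ≤ j) (hjk : j ≤ k) :
    seg u i j ++ seg u j k = seg u i k := by
  unfold seg
  rw [show k - i = (j - i) + (k - j) by omega, List.range_add, List.map_append, List.map_map]
  congr 2
  funext x
  simp only [Function.comp_apply]
  congr 1
  omega

lemma seg_infix_seg (u : ℕ → A) {a b c d : ℕ} (hab : a ≤ b) (hbc : b ≤ c) (hcd : c ≤ d) :
    seg u b c <:+: seg u a d :=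
  ⟨seg u a b, seg u c d, by
    rw [List.append_assoc, seg_append_seg u hbc hcd, seg_append_seg u hab (hbc.trans hcd)]⟩

lemma seg_zero_succ (u : ℕ → A) (j : ℕ) : seg u 0 (j + 1) = seg u 0 j ++ [u j] := by
  simp [seg, List.range_succ]

section Substitution

variable (σ : A → List A)

lemma substPow_succ (p : ℕ) (x : List A) :
    substPow σ (p + 1) x = substWord σ (substPow σ p x) :=
  Function.iterate_succ_apply' _ _ _

lemma substPow_add (p q : ℕ) (x : List A) :
    substPow σ (p + q) x = substPow σ p (substPow σ q x) :=
  Function.iterate_add_apply _ _ _ _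

lemma substPow_append (p : ℕ) (x y : List A) :
    substPow σ p (x ++ y) = substPow σ p x ++ substPow σ p y := by
  induction p with
  | zero => rfl
  | succ p ih => simp only [substPow_succ, ih, substWord, List.flatMap_append]

lemma substPow_nil (p : ℕ) : substPow σ p [] = [] := by
  induction p with
  | zero => rfl
  | succ p ih => simp [substPow_succ, ih, substWord]

lemma substPow_cons (p : ℕ) (a : A) (x : List A) :
    substPow σ p (a :: x) = substPow σ p [a] ++ substPow σ p x :=
  substPow_append σ p [a] x

lemma substPow_infix (p : ℕ) {x y : List A} (h : x <:+: y) :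
    substPow σ p x <:+: substPow σ p y := by
  induction p with
  | zero => exact h
  | succ p ih => simpa only [substPow_succ, substWord] using ih.flatMap σ

lemma mul_length_le_length_substPow {p c : ℕ} (h : ∀ a : A, c ≤ (substPow σ p [a]).length)
    (x : List A) : c * x.length ≤ (substPow σ p x).length := by
  induction x with
  | nil => simp
  | cons a x ih =>
    rw [substPow_cons, List.length_append, List.length_cons, Nat.mul_succ]
    have := h a
    omega

lemma pow_le_length_substPow_mul {k c : ℕ} (h : ∀ a : A, c ≤ (substPow σ k [a]).length)
    (m : ℕ) (a : A) : c ^ m ≤ (substPow σ (m * k) [a]).length := by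
  induction m generalizing a with
  | zero => simp [substPow]
  | succ m ih =>
    rw [Nat.succ_mul, substPow_add σ (m * k) k]
    calc c ^ (m + 1) = c ^ m * c := pow_succ c m
      _ ≤ c ^ m * (substPow σ k [a]).length := Nat.mul_le_mul_left _ (h a)
      _ ≤ _ := mul_length_le_length_substPow σ ih _

lemma length_le_length_substPow (hσne : ∀ a, σ a ≠ []) (p : ℕ) (x : List A) :
    x.length ≤ (substPow σ p x).length := by
  have hword (y : List A) : y.length ≤ (substWord σ y).length := by
    simpa [substPow] using mul_length_le_length_substPow σ (p := 1) (c := 1)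
      (fun a => by simpa [substPow, substWord, Nat.one_le_iff_ne_zero] using hσne a) y
  induction p with
  | zero => rfl
  | succ p ih => exact ih.trans (by rw [substPow_succ]; exact hword _)

end Substitution

lemma exists_le_and_lt_succ_of_strictMono {f : ℕ → ℕ} (hf : StrictMono f) (h0 : f 0 = 0)
    (i : ℕ) : ∃ j, f j ≤ i ∧ i < f (j + 1) := by
  induction i with
  | zero => exact ⟨0, h0.le, by simpa [h0] using hf Nat.zero_lt_one⟩
  | succ i ih =>
    obtain ⟨j, hji, hij⟩ := ih
    by_cases h : i + 1 < f (j + 1)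
    · exact ⟨j, by omega, h⟩
    · exact ⟨j + 1, by omega, by have := hf (Nat.lt_add_one (j + 1)); omega⟩

lemma exists_block_subset_window {f : ℕ → ℕ} {S : ℕ} (h0 : f 0 = 0)
    (hf : ∀ j, f j < f (j + 1) ∧ f (j + 1) ≤ f j + S) (i : ℕ) :
    ∃ j, i ≤ f j ∧ f (j + 1) ≤ i + 2 * S := by
  obtain ⟨j, hji, hij⟩ :=
    exists_le_and_lt_succ_of_strictMono (strictMono_nat_of_lt_succ fun j => (hf j).1) h0 i
  refine ⟨j + 1, hij.le, ?_⟩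
  have := (hf j).2
  have := (hf (j + 1)).2
  omega

variable {σ : A → List A} {u : ℕ → A}

lemma IsFixedPoint.substPow_seg (hfix : IsFixedPoint σ u) (p m : ℕ) :
    substPow σ p (seg u 0 m) = seg u 0 (substPow σ p (seg u 0 m)).length := by
  induction p with
  | zero => simp only [substPow, Function.iterate_zero, id_eq, length_seg, Nat.sub_zero]
  | succ p ih => rw [substPow_succ, ih]; exact hfix _

lemma IsFixedPoint.substPow_singleton_zero (hfix : IsFixedPoint σ u) (p : ℕ) :
    substPow σ p [u 0] = seg u 0 (substPow σ p [u 0]).length := by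
  simpa [seg] using hfix.substPow_seg p 1

variable (σ u) in
def cutPoint (n j : ℕ) : ℕ := (substPow σ n (seg u 0 j)).length

variable (σ u) in
lemma cutPoint_zero (n : ℕ) : cutPoint σ u n 0 = 0 := by
  simp [cutPoint, seg, substPow_nil]

variable (σ u) in
lemma cutPoint_succ (n j : ℕ) :
    cutPoint σ u n (j + 1) = cutPoint σ u n j + (substPow σ n [u j]).length := by
  simp only [cutPoint, seg_zero_succ, substPow_append, List.length_append]

lemma IsFixedPoint.seg_cutPoint (hfix : IsFixedPoint σ u) (n j : ℕ) :
    seg u (cutPoint σ u n j) (cutPoint σ u n (j + 1)) = substPow σ n [u j] := by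
  have hprefix : seg u 0 (cutPoint σ u n j) ++ substPow σ n [u j] =
      seg u 0 (cutPoint σ u n (j + 1)) := by
    rw [cutPoint, ← hfix.substPow_seg, ← substPow_append, ← seg_zero_succ]
    exact hfix.substPow_seg n (j + 1)
  refine List.append_cancel_left (?_ : seg u 0 (cutPoint σ u n j) ++ _ = _ ++ _)
  rw [hprefix, seg_append_seg u (Nat.zero_le _) (by rw [cutPoint_succ]; omega)]

section Finite

variable [Fintype A]

lemma card_le_length_of_forall_mem [DecidableEq A] {l : List A} (h : ∀ a, a ∈ l) :
    Fintype.card A ≤ l.length :=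
  (Finset.card_le_card fun a _ => List.mem_toFinset.mpr (h a)).trans l.toFinset_card_le

variable [Nonempty A]

variable (σ) in
lemma length_substPow_le_Sp (n : ℕ) (a : A) : (substPow σ n [a]).length ≤ Sp σ n :=
  Finset.le_sup' (fun a => (substPow σ n [a]).length) (Finset.mem_univ a)

lemma one_le_Sp (hσne : ∀ a, σ a ≠ []) (n : ℕ) : 1 ≤ Sp σ n :=
  (length_le_length_substPow σ hσne n [Classical.arbitrary A]).trans
    (length_substPow_le_Sp σ n _)

lemma IsFixedPoint.exists_substPow_infix_seg (hσne : ∀ a, σ a ≠ []) (hfix : IsFixedPoint σ u)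
    (n i : ℕ) : ∃ j, substPow σ n [u j] <:+: seg u i (i + 2 * Sp σ n) := by
  have hstep (j : ℕ) : cutPoint σ u n j < cutPoint σ u n (j + 1) ∧
      cutPoint σ u n (j + 1) ≤ cutPoint σ u n j + Sp σ n := by
    rw [cutPoint_succ]
    have := length_le_length_substPow σ hσne n [u j]
    exact ⟨by simp only [List.length_singleton] at this; omega,
      Nat.add_le_add_left (length_substPow_le_Sp σ n (u j)) _⟩
  obtain ⟨j, hij, hji⟩ := exists_block_subset_window (cutPoint_zero σ u n) hstep i
  exact ⟨j, hfix.seg_cutPoint n j ▸ seg_infix_seg u hij (hstep j).1.le hji⟩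

end Finite

lemma IsFixedPoint.exists_forall_infix_substPow [Fintype A] [DecidableEq A]
    (h2 : 2 ≤ Fintype.card A) (hprim : IsPrimitiveSubst σ) (hfix : IsFixedPoint σ u)
    {w : List A} (hw : w ∈ lang u) : ∃ n, ∀ a, w <:+: substPow σ n [a] := by
  obtain ⟨i, ℓ, rfl⟩ := hw
  obtain ⟨k, hk⟩ := hprim
  set p := (i + ℓ) * k
  have hlong : i + ℓ ≤ (substPow σ p [u 0]).length :=
    Nat.lt_two_pow_self.le.trans <| pow_le_length_substPow_mul σ
      (fun a => h2.trans (card_le_length_of_forall_mem (hk · a))) _ _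
  have hw : seg u i (i + ℓ) <:+: substPow σ p [u 0] :=
    hfix.substPow_singleton_zero p ▸ seg_infix_seg u (Nat.zero_le i) (Nat.le_add_right i ℓ) hlong
  refine ⟨p + k, fun a => hw.trans ?_⟩
  rw [substPow_add]
  exact substPow_infix σ p ((List.singleton_infix_iff _ _).mpr (hk (u 0) a))

end UniformRecurrence

/-- Uniform recurrence of the fixed point: every `w ∈ L(u)` occurs in every window of
some length `g`; there is `n` with `w ≺ σⁿ(a)` for all `a` (by primitivity), and for any
such `n` one may take `g = 2 max_a |σⁿ(a)|`. -/
theorem stmt_18 (A : Type*) [Fintype A] [DecidableEq A] [Nonempty A]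
    (h2 : 2 ≤ Fintype.card A)
    (σ : A → List A) (hσne : ∀ a, σ a ≠ [])
    (hprim : IsPrimitiveSubst σ)
    (u : ℕ → A) (hfix : IsFixedPoint σ u) :
    ∀ w ∈ lang u,
      (∃ g : ℕ, 1 ≤ g ∧ ∀ i : ℕ, w <:+: seg u i (i + g)) ∧
      (∃ n : ℕ, ∀ a : A, w <:+: substPow σ n [a]) ∧
      (∀ n : ℕ, (∀ a : A, w <:+: substPow σ n [a]) →
        ∀ i : ℕ, w <:+: seg u i (i + 2 * Sp σ n)) := by
  intro w hw
  have hwindow (n : ℕ) (hn : ∀ a, w <:+: substPow σ n [a]) (i : ℕ) :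
      w <:+: seg u i (i + 2 * Sp σ n) := by
    obtain ⟨j, hj⟩ := hfix.exists_substPow_infix_seg hσne n i
    exact (hn (u j)).trans hj
  obtain ⟨n, hn⟩ := hfix.exists_forall_infix_substPow h2 hprim hw
  have hg : 1 ≤ 2 * Sp σ n := (one_le_Sp hσne n).trans (Nat.le_mul_of_pos_left _ two_pos)
  exact ⟨⟨2 * Sp σ n, hg, hwindow n hn⟩, ⟨n, hn⟩, hwindow⟩
end
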